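/- arXiv:1003.3004 — 2 statements merged into one kernel-verified Lean document; each statement's English description precedes it below -/
import Mathlib

section
/- For positive integers n, k with n ≥ 2 or k ≥ 10 or k ≤ 3, and k not a perfect square, the set of primes p with p² = kn² + ℓn + 1 for some integer ℓ, |ℓ| ≤ 2√k, contains at most one element, unless n = 1 and 4 ≤ k ≤ 9 (in which case it can be {2,3}), or k = h² with both hn−1 and hn+1 prime (in which case it is {hn−1, hn+1}). -/
/-! Put `s = n√k`. Since `p² - s² - 1 = ℓn` and `|ℓn| ≤ 2s`, every prime of the set lies in the
interval `[s - 1, s + 1]`, so two distinct ones differ by `1` or `2`. A difference of `2` would put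
them at the endpoints, making `s` an integer, whereas `s` is irrational. Primes differing by `1`
are `2` and `3`; then `n` divides both `2² - 1` and `3² - 1`, so `n = 1`, and `2 ≤ √k ≤ 3`
gives `4 ≤ k ≤ 9`, which is excluded. -/

theorem abs_sub_le_one_of_abs_sq_sub_sq_sub_one_le {x s : ℝ} (hx : 0 ≤ x) (hs : 0 ≤ s)
    (h : |x ^ 2 - s ^ 2 - 1| ≤ 2 * s) : |x - s| ≤ 1 := by
  rw [abs_le] at h ⊢
  constructor <;> nlinarith [h.1, h.2]

theorem Nat.Prime.eq_two_of_prime_add_one {p : ℕ} (hp : p.Prime) (hp' : (p + 1).Prime) :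
    p = 2 := by
  rcases hp.eq_two_or_odd' with h | h
  · exact h
  · have := hp'.even_iff.mp h.add_one
    have := hp.two_le
    omega

theorem Nat.Prime.eq_or_eq_two_and_eq_three_of_abs_sub_le_one {p q : ℕ} {s : ℝ}
    (hp : p.Prime) (hq : q.Prime) (hpq : p ≤ q) (hs : Irrational s)
    (hps : |(p : ℝ) - s| ≤ 1) (hqs : |(q : ℝ) - s| ≤ 1) : p = q ∨ p = 2 ∧ q = 3 := by
  rw [abs_le] at hps hqs
  have hq_le : (q : ℝ) ≤ p + 2 := by linarith
  obtain rfl | rfl | rfl : q = p ∨ q = p + 1 ∨ q = p + 2 := by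
    have : q ≤ p + 2 := by exact_mod_cast hq_le
    omega
  · exact Or.inl rfl
  · obtain rfl := hp.eq_two_of_prime_add_one hq
    exact Or.inr ⟨rfl, rfl⟩
  · exact absurd (show s = ((p + 1 : ℕ) : ℝ) by push_cast at hqs ⊢; linarith) (hs.ne_nat _)

section

variable {n k p : ℕ} {ℓ : ℤ}

theorem abs_natCast_sub_mul_sqrt_le_one (hℓ : |(ℓ : ℝ)| ≤ 2 * √k)
    (he : (p : ℤ) ^ 2 = k * n ^ 2 + ℓ * n + 1) : |(p : ℝ) - n * √k| ≤ 1 := by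
  have heR : (p : ℝ) ^ 2 - (n * √k) ^ 2 - 1 = ℓ * n := by
    rw [mul_pow, Real.sq_sqrt k.cast_nonneg]
    exact_mod_cast (by linear_combination he : (p : ℤ) ^ 2 - n ^ 2 * k - 1 = ℓ * n)
  refine abs_sub_le_one_of_abs_sq_sub_sq_sub_one_le p.cast_nonneg (by positivity) ?_
  rw [heR, abs_mul, Nat.abs_cast]
  nlinarith [n.cast_nonneg (α := ℝ)]

theorem natCast_dvd_sq_sub_one (he : (p : ℤ) ^ 2 = k * n ^ 2 + ℓ * n + 1) : (n : ℤ) ∣ p ^ 2 - 1 :=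
  ⟨k * n + ℓ, by linear_combination he⟩

theorem ne_zero_of_prime_of_sq_eq (hp : p.Prime) (he : (p : ℤ) ^ 2 = k * n ^ 2 + ℓ * n + 1) :
    n ≠ 0 := by
  rintro rfl
  exact hp.ne_one (by simpa using he)

end

theorem stmt_6_general (n k : ℕ)
    (hcond : 2 ≤ n ∨ 10 ≤ k ∨ k ≤ 3) (hsq : ¬ ∃ h : ℕ, k = h ^ 2) :
    ({p : ℕ | p.Prime ∧ ∃ ℓ : ℤ, |(ℓ : ℝ)| ≤ 2 * Real.sqrt k ∧
        (p : ℤ) ^ 2 = k * n ^ 2 + ℓ * n + 1} : Set ℕ).Subsingleton ∨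
      (n = 1 ∧ 4 ≤ k ∧ k ≤ 9 ∧
        {p : ℕ | p.Prime ∧ ∃ ℓ : ℤ, |(ℓ : ℝ)| ≤ 2 * Real.sqrt k ∧
          (p : ℤ) ^ 2 = k * n ^ 2 + ℓ * n + 1} = {2, 3}) ∨
      (∃ h : ℕ, k = h ^ 2 ∧ (h * n - 1).Prime ∧ (h * n + 1).Prime ∧
        {p : ℕ | p.Prime ∧ ∃ ℓ : ℤ, |(ℓ : ℝ)| ≤ 2 * Real.sqrt k ∧
          (p : ℤ) ^ 2 = k * n ^ 2 + ℓ * n + 1} = {h * n - 1, h * n + 1}) := by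
  refine Or.inl fun p hp q hq => ?_
  wlog hpq : p ≤ q generalizing p q
  · exact (this q hq p hp (le_of_not_ge hpq)).symm
  obtain ⟨hp, ℓ₁, hℓ₁, he₁⟩ := hp
  obtain ⟨hq, ℓ₂, hℓ₂, he₂⟩ := hq
  have hps := abs_natCast_sub_mul_sqrt_le_one hℓ₁ he₁
  have hqs := abs_natCast_sub_mul_sqrt_le_one hℓ₂ he₂
  have hirr : Irrational (n * √k) :=
    (irrational_sqrt_natCast_iff.mpr fun ⟨r, hr⟩ => hsq ⟨r, hr.trans (sq r).symm⟩).natCast_mul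
      (ne_zero_of_prime_of_sq_eq hp he₁)
  obtain rfl | ⟨rfl, rfl⟩ := hp.eq_or_eq_two_and_eq_three_of_abs_sub_le_one hq hpq hirr hps hqs
  · rfl
  obtain rfl : n = 1 := by
    have h3 : (n : ℤ) ∣ 3 := by simpa using natCast_dvd_sq_sub_one he₁
    have h8 : (n : ℤ) ∣ 8 := by simpa using natCast_dvd_sq_sub_one he₂
    norm_cast at h3 h8
    exact Nat.eq_one_of_dvd_coprimes (by norm_num) h3 h8
  rw [abs_le] at hps hqs
  push_cast at hps hqs
  have hk4 : 4 ≤ k := by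
    exact_mod_cast (Real.le_sqrt' (by norm_num)).mp (by linarith : (2 : ℝ) ≤ √k)
  have hk9 : k ≤ 9 := by
    exact_mod_cast (Real.sqrt_le_left (by norm_num)).mp (by linarith : √k ≤ (3 : ℝ))
  omega

/-- For positive integers `n, k` with `n ≥ 2` or `k ≥ 10` or `k ≤ 3`, and `k` not a
perfect square, the set of primes `p` with `p^2 = k*n^2 + ℓ*n + 1` for some `ℓ` with
`|ℓ| ≤ 2√k` contains at most one element, unless `n = 1` and `4 ≤ k ≤ 9` (in which case
it can be `{2, 3}`), or `k = h^2` with `h*n - 1` and `h*n + 1` both prime (in which case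
it is `{h*n - 1, h*n + 1}`). -/
theorem stmt_6 (n k : ℕ) (hn : 0 < n) (hk : 0 < k)
    (hcond : 2 ≤ n ∨ 10 ≤ k ∨ k ≤ 3) (hsq : ¬ ∃ h : ℕ, k = h ^ 2) :
    ({p : ℕ | p.Prime ∧ ∃ ℓ : ℤ, |(ℓ : ℝ)| ≤ 2 * Real.sqrt k ∧
        (p : ℤ) ^ 2 = k * n ^ 2 + ℓ * n + 1} : Set ℕ).Subsingleton ∨
      (n = 1 ∧ 4 ≤ k ∧ k ≤ 9 ∧
        {p : ℕ | p.Prime ∧ ∃ ℓ : ℤ, |(ℓ : ℝ)| ≤ 2 * Real.sqrt k ∧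
          (p : ℤ) ^ 2 = k * n ^ 2 + ℓ * n + 1} = {2, 3}) ∨
      (∃ h : ℕ, k = h ^ 2 ∧ (h * n - 1).Prime ∧ (h * n + 1).Prime ∧
        {p : ℕ | p.Prime ∧ ∃ ℓ : ℤ, |(ℓ : ℝ)| ≤ 2 * Real.sqrt k ∧
          (p : ℤ) ^ 2 = k * n ^ 2 + ℓ * n + 1} = {h * n - 1, h * n + 1}) :=
  stmt_6_general n k hcond hsq
end

section
/- If m ≥ 3 and x, y are integers with y^m = x² + 1, then x = 0 and y^m = 1 (Lebesgue's theorem). -/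
open Zsqrtd Finset

local notation "ℤi" => GaussianInt




namespace LebesgueAux

/-- two squares differing by one -/
lemma sq_eq_sq_add_one (x z : ℤ) (h : z ^ 2 = x ^ 2 + 1) : x = 0 := by
  have h1 : (z - x) * (z + x) = 1 := by ring_nf; linarith
  rcases Int.eq_one_or_neg_one_of_mul_eq_one' h1 with ⟨h2,h3⟩|⟨h2,h3⟩ <;> omega

/-- splitting a sum over an even range into odd-index terms -/
lemma sum_odd_split (f : ℕ → ℤ) (hf : ∀ k, f (2*k) = 0) (s : ℕ) :
    ∑ k ∈ range (2*s+2), f k = ∑ j ∈ range (s+1), f (2*j+1) := by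
  induction s with
  | zero => simp [sum_range_succ, hf 0]
  | succ n ih =>
      have e1 : 2*(n+1)+2 = (2*n+2) + 1 + 1 := by ring
      rw [e1, sum_range_succ, sum_range_succ, ih, sum_range_succ]
      have : 2*n+2 = 2*(n+1) := by ring
      rw [this, hf (n+1)]
      rw [sum_range_succ]
      have e2 : 2*(n+1)+1 = 2*n+3 := by ring
      rw [e2, sum_range_succ]; ring

end LebesgueAux




namespace LebAux2


lemma sum_odd_split' (f : ℕ → ℤ) (hf : ∀ k, f (2*k) = 0) (s : ℕ) :
    ∑ k ∈ range (2*s+2), f k = ∑ j ∈ range (s+1), f (2*j+1) := by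
  induction s with
  | zero => simp [sum_range_succ, hf 0]
  | succ n ih =>
      have e1 : 2*(n+1)+2 = (2*n+2) + 1 + 1 := by ring
      rw [e1, sum_range_succ, sum_range_succ, ih, sum_range_succ]
      have : 2*n+2 = 2*(n+1) := by ring
      rw [this, hf (n+1)]
      have e2 : 2*(n+1)+1 = 2*n+3 := by ring
      rw [sum_range_succ, e2, sum_range_succ]; ring

def imHom : ℤi →+ ℤ where
  toFun := Zsqrtd.im
  map_zero' := rfl
  map_add' := fun _ _ => rfl

def Ii : ℤi := ⟨0, 1⟩

lemma hI2 : Ii ^ 2 = -1 := by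
  refine Zsqrtd.ext ?_ ?_ <;> simp [Ii, pow_two, Zsqrtd.re_mul, Zsqrtd.im_mul]

lemma Ipow_even (j : ℕ) : Ii ^ (2*j) = (((-1)^j : ℤ) : ℤi) := by
  induction j with
  | zero => simp
  | succ n ih =>
      have : 2*(n+1) = 2*n + 2 := by ring
      rw [this, pow_add, ih, hI2]
      push_cast
      ring

lemma Ipow_odd (j : ℕ) : Ii ^ (2*j+1) = (((-1)^j : ℤ) : ℤi) * Ii := by
  rw [pow_succ, Ipow_even]

lemma im_pow_formula (a b : ℤ) (s : ℕ) :
    (((⟨a, b⟩ : ℤi)) ^ (2*s+1)).im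
      = ∑ j ∈ range (s+1),
          b^(2*j+1) * a^(2*(s-j)) * (((2*s+1).choose (2*j+1) : ℤ)) * (-1)^j := by
  have hmk : (⟨a, b⟩ : ℤi) = (b : ℤi) * Ii + (a : ℤi) := by
    rw [Zsqrtd.ext_iff]
    constructor <;>
      simp [Ii, Zsqrtd.re_mul, Zsqrtd.im_mul, Zsqrtd.re_add, Zsqrtd.im_add]
  rw [hmk, add_pow]
  rw [show ((2*s+1)+1) = 2*s+2 by ring]
  have hterm : ∀ k, (((b:ℤi)*Ii)^k * (a:ℤi)^(2*s+1-k) * ((2*s+1).choose k : ℤi))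
      = ((b^k * a^(2*s+1-k) * ((2*s+1).choose k : ℤ) : ℤ) : ℤi) * Ii^k := by
    intro k
    push_cast
    ring
  have him : (∑ k ∈ range (2*s+2), ((b:ℤi)*Ii)^k * (a:ℤi)^(2*s+1-k) * ((2*s+1).choose k : ℤi)).im
      = ∑ k ∈ range (2*s+2), (b^k * a^(2*s+1-k) * ((2*s+1).choose k : ℤ)) * (Ii^k).im := by
    rw [show (∑ k ∈ range (2*s+2), ((b:ℤi)*Ii)^k * (a:ℤi)^(2*s+1-k) * ((2*s+1).choose k : ℤi)).im
        = imHom (∑ k ∈ range (2*s+2), ((b:ℤi)*Ii)^k * (a:ℤi)^(2*s+1-k) * ((2*s+1).choose k : ℤi)) from rfl]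
    rw [map_sum]
    refine Finset.sum_congr rfl fun k _ => ?_
    rw [show (imHom (((b:ℤi)*Ii)^k * (a:ℤi)^(2*s+1-k) * ((2*s+1).choose k : ℤi)))
        = ((((b:ℤi)*Ii)^k * (a:ℤi)^(2*s+1-k) * ((2*s+1).choose k : ℤi))).im from rfl]
    rw [hterm k, Zsqrtd.im_smul]
  rw [him]
  rw [sum_odd_split' (fun k => (b^k * a^(2*s+1-k) * ((2*s+1).choose k : ℤ)) * (Ii^k).im) ?_ s]
  · refine Finset.sum_congr rfl fun j hj => ?_
    have hj' : j ≤ s := by simpa using Nat.lt_succ_iff.mp (Finset.mem_range.mp hj)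
    have he : 2*s+1 - (2*j+1) = 2*(s-j) := by omega
    rw [Ipow_odd, he, Zsqrtd.im_smul]
    simp [Ii]
  · intro k
    have h0 : (Ii^(2*k)).im = 0 := by rw [Ipow_even]; exact Zsqrtd.im_intCast _
    simp [h0]

end LebAux2



namespace LebAux3

/-- key ℕ divisibility: for `n ≥ 2`, `2^(σ+2e+1) ∣ C(2s+1, 2n) * (2^e·a₀)^(2n)`
    where `s = 2^σ s'` with `s'` odd, `a₀` odd, `e ≥ 1`. -/
lemma key_dvd (σ s' e a₀ n : ℕ) (hs' : Odd s') (ha₀ : Odd a₀) (he : 1 ≤ e) (hn : 2 ≤ n) :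
    2^(σ+2*e+1) ∣ (2*(2^σ*s')+1).choose (2*n) * (2^e*a₀)^(2*n) := by
  set s := 2^σ * s' with hsdef
  set m := 2*s+1 with hmdef
  have hs1 : 1 ≤ s := by
    rw [hsdef]
    exact Nat.mul_pos (pow_pos (by norm_num) σ) hs'.pos
  -- binomial identity
  have id1 : (2*s+1) * ((2*s).choose (2*n-1)) = m.choose (2*n) * (2*n) := by
    have h := Nat.add_one_mul_choose_eq (2*s) (2*n-1)
    have h1 : (2*n-1)+1 = 2*n := by omega
    rw [h1] at h
    exact h
  have id2 : (2*s) * ((2*s-1).choose (2*n-2)) = (2*s).choose (2*n-1) * (2*n-1) := by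
    have h := Nat.add_one_mul_choose_eq (2*s-1) (2*n-2)
    have h1 : (2*n-2)+1 = 2*n-1 := by omega
    have h2 : (2*s-1)+1 = 2*s := by omega
    rw [h2, h1] at h
    exact h
  have id3 : m.choose (2*n) * (2*n) * (2*n-1) = (2*s+1) * (2*s) * ((2*s-1).choose (2*n-2)) := by
    calc m.choose (2*n) * (2*n) * (2*n-1)
        = (2*s+1) * ((2*s).choose (2*n-1) * (2*n-1)) := by rw [← id1]; ring
      _ = (2*s+1) * ((2*s) * ((2*s-1).choose (2*n-2))) := by rw [id2]
      _ = (2*s+1) * (2*s) * ((2*s-1).choose (2*n-2)) := by ring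
  -- decompose n
  obtain ⟨τ, n', hn'2, hnfact⟩ := Nat.exists_eq_pow_mul_and_not_dvd (show n ≠ 0 by omega) 2 (by norm_num)
  have hn' : Odd n' := Nat.odd_iff.mpr (by omega)
  have hτn : τ + 1 ≤ n := by
    have h1 : τ < 2^τ := Nat.lt_two_pow_self
    have h2 : 2^τ ≤ n := by
      rw [hnfact]; exact Nat.le_mul_of_pos_right _ (by omega)
    omega
  -- 2^(σ+1) divides choose * 2^(τ+1)
  have hdvd1 : 2^(σ+1) ∣ m.choose (2*n) * (2*n) * (2*n-1) := by
    rw [id3, hsdef]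
    exact ⟨(2*(2^σ*s')+1) * s' * ((2*(2^σ*s')-1).choose (2*n-2)), by ring⟩
  have hrw : m.choose (2*n) * (2*n) * (2*n-1) = (m.choose (2*n) * 2^(τ+1)) * (n' * (2*n-1)) := by
    rw [hnfact]; ring
  have hcop : Nat.Coprime (2^(σ+1)) (n' * (2*n-1)) := by
    apply Nat.Coprime.pow_left
    rw [Nat.coprime_two_left]
    exact hn'.mul (Nat.odd_iff.mpr (by omega))
  have hdvd2 : 2^(σ+1) ∣ m.choose (2*n) * 2^(τ+1) := by
    refine Nat.Coprime.dvd_of_dvd_mul_right hcop ?_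
    rw [← hrw]; exact hdvd1
  -- now multiply with the power of a
  have habs : (2^e*a₀)^(2*n) = 2^(2*e*n) * a₀^(2*n) := by
    rw [mul_pow, ← pow_mul, show e*(2*n) = 2*e*n from by ring]
  have hdvd3 : 2^(σ+1+2*e*n) ∣ (m.choose (2*n) * (2^e*a₀)^(2*n)) * 2^(τ+1) := by
    have hre : (m.choose (2*n) * (2^e*a₀)^(2*n)) * 2^(τ+1)
        = ((m.choose (2*n) * 2^(τ+1)) * 2^(2*e*n)) * a₀^(2*n) := by
      rw [habs]; ring
    rw [hre, pow_add]
    exact Dvd.dvd.mul_right (mul_dvd_mul hdvd2 dvd_rfl) _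
  have hexp : σ+2*e+1 + (τ+1) ≤ σ+1+2*e*n := by nlinarith [hτn, hn, he]
  have hdvd4 : 2^(σ+2*e+1) * 2^(τ+1) ∣ (m.choose (2*n) * (2^e*a₀)^(2*n)) * 2^(τ+1) := by
    refine dvd_trans ?_ hdvd3
    rw [← pow_add]
    exact pow_dvd_pow 2 hexp
  exact (Nat.mul_dvd_mul_iff_right (show 0 < 2^(τ+1) by positivity)).mp hdvd4

end LebAux3

namespace Crux

lemma crux (s : ℕ) (hs : 1 ≤ s) (a : ℤ) (ha : a ≠ 0) (hae : Even a)
    (hZ : ∑ j ∈ range s, a^(2*(s-j)) * (((2*s+1).choose (2*j+1)) : ℤ) * (-1)^j = 0) :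
    False := by
  -- reflect the sum
  have h1 : ∑ j ∈ range s,
      a^(2*(s-(s-1-j))) * (((2*s+1).choose (2*(s-1-j)+1)) : ℤ) * (-1)^(s-1-j) = 0 := by
    rw [Finset.sum_range_reflect (fun j => a^(2*(s-j)) * (((2*s+1).choose (2*j+1)) : ℤ) * (-1)^j) s]
    exact hZ
  -- switch to the "ascending" form
  have hS : ∑ j ∈ range s, a^(2*(j+1)) * (((2*s+1).choose (2*(j+1))) : ℤ) * (-1)^j = 0 := by
    have h2 : ∑ j ∈ range s, a^(2*(j+1)) * (((2*s+1).choose (2*(j+1))) : ℤ) * (-1)^j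
        = (-1:ℤ)^(s-1) * ∑ j ∈ range s,
            a^(2*(s-(s-1-j))) * (((2*s+1).choose (2*(s-1-j)+1)) : ℤ) * (-1)^(s-1-j) := by
      rw [Finset.mul_sum]
      refine Finset.sum_congr rfl fun j hj => ?_
      have hjs : j < s := Finset.mem_range.mp hj
      have e1 : s - (s-1-j) = j+1 := by omega
      have e2 : 2*(s-1-j)+1 = (2*s+1) - 2*(j+1) := by omega
      have e3 : (2*s+1).choose ((2*s+1) - 2*(j+1)) = (2*s+1).choose (2*(j+1)) :=
        Nat.choose_symm (by omega)
      have hsign : (-1:ℤ)^(s-1) * (-1)^(s-1-j) = (-1)^j := by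
        rw [← pow_add, show (s-1)+(s-1-j) = 2*(s-1-j)+j from by omega, pow_add, pow_mul]
        norm_num
      rw [e1, e2, e3, ← hsign]
      ring
    rw [h2, h1, mul_zero]
  -- peel off the first term
  obtain ⟨s0, rfl⟩ : ∃ s0, s = s0 + 1 := ⟨s-1, by omega⟩
  rw [Finset.sum_range_succ'] at hS
  -- decompositions
  obtain ⟨σ, s', hs'2, hsfact⟩ :=
    Nat.exists_eq_pow_mul_and_not_dvd (show s0+1 ≠ 0 by omega) 2 (by norm_num)
  have hs'odd : Odd s' := Nat.odd_iff.mpr (by omega)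
  have hana : a.natAbs ≠ 0 := by simpa using ha
  obtain ⟨e, a₀, ha₀2, hafact⟩ := Nat.exists_eq_pow_mul_and_not_dvd hana 2 (by norm_num)
  have ha₀odd : Odd a₀ := Nat.odd_iff.mpr (by omega)
  have he : 1 ≤ e := by
    by_contra hno
    have he0 : e = 0 := by omega
    have : Even a.natAbs := Int.natAbs_even.mpr hae
    rw [hafact, he0] at this
    simp only [pow_zero, one_mul, Nat.even_iff] at this
    omega
  -- a² as a power of 2 times odd
  have ha2 : a^2 = 2^(2*e) * ((a₀:ℤ))^2 := by
    have : a^2 = ((a.natAbs : ℤ))^2 := (Int.natAbs_sq a).symm ▸ by push_cast [Int.natAbs_sq]; ring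
    rw [this, hafact]
    push_cast
    ring
  -- each term in the remaining sum is divisible by 2^(σ+2e+1)
  have hterm : ∀ i, (2:ℤ)^(σ+2*e+1) ∣
      a^(2*((i+1)+1)) * (((2*(s0+1)+1).choose (2*((i+1)+1))) : ℤ) * (-1)^(i+1) := by
    intro i
    have hknat := LebAux3.key_dvd σ s' e a₀ (i+2) hs'odd ha₀odd he (by omega)
    rw [← hsfact] at hknat
    have hkint : (2:ℤ)^(σ+2*e+1) ∣
        (((2*(s0+1)+1).choose (2*(i+2)) * ((2^e*a₀))^(2*(i+2)) : ℕ) : ℤ) := by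
      exact_mod_cast Int.natCast_dvd_natCast.mpr hknat
    have hapow : a^(2*(i+2)) = (((2^e*a₀ : ℕ)) : ℤ)^(2*(i+2)) := by
      rw [show 2*(i+2) = 2*(i+2) from rfl, ← hafact]
      rw [show (2:ℕ)*(i+2) = 2*(i+2) from rfl]
      have : a^(2*(i+2)) = (a^2)^(i+2) := by rw [← pow_mul]
      rw [this, ha2, hafact]
      push_cast
      ring
    have : a^(2*((i+1)+1)) * (((2*(s0+1)+1).choose (2*((i+1)+1))) : ℤ) * (-1)^(i+1)
        = ((((2*(s0+1)+1).choose (2*(i+2)) * ((2^e*a₀))^(2*(i+2)) : ℕ) : ℤ)) * (-1)^(i+1) := by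
      push_cast
      rw [show (i+1)+1 = i+2 from rfl, hapow]
      push_cast
      ring
    rw [this]
    exact Dvd.dvd.mul_right hkint _
  -- hence 2^(σ+2e+1) divides the first term
  have hdvd0 : (2:ℤ)^(σ+2*e+1) ∣
      a^(2*(0+1)) * (((2*(s0+1)+1).choose (2*(0+1))) : ℤ) * (-1:ℤ)^0 := by
    have hsum : (2:ℤ)^(σ+2*e+1) ∣
        ∑ i ∈ range s0, a^(2*((i+1)+1)) * (((2*(s0+1)+1).choose (2*((i+1)+1))) : ℤ) * (-1)^(i+1) :=
      Finset.dvd_sum fun i _ => hterm i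
    have : a^(2*(0+1)) * (((2*(s0+1)+1).choose (2*(0+1))) : ℤ) * (-1:ℤ)^0
        = -∑ i ∈ range s0, a^(2*((i+1)+1)) * (((2*(s0+1)+1).choose (2*((i+1)+1))) : ℤ) * (-1)^(i+1) := by
      linarith [hS]
    rw [this]
    exact dvd_neg.mpr hsum
  -- but the first term is 2^(σ+2e) times an odd number
  have hC2 : (((2*(s0+1)+1).choose 2) : ℤ) = (2*(s0+1)+1) * (s0+1) := by
    have hnat : (2*(s0+1)+1).choose 2 = (2*(s0+1)+1) * (s0+1) := by
      rw [Nat.choose_two_right]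
      have h1 : 2*(s0+1)+1-1 = 2*(s0+1) := by omega
      rw [h1, show (2*(s0+1)+1) * (2*(s0+1)) = ((2*(s0+1)+1) * (s0+1)) * 2 from by ring]
      exact Nat.mul_div_cancel _ (by norm_num)
    exact_mod_cast congrArg (Nat.cast : ℕ → ℤ) hnat
  have hfirst : a^(2*(0+1)) * (((2*(s0+1)+1).choose (2*(0+1))) : ℤ) * (-1:ℤ)^0
      = 2^(σ+2*e) * ((2*(s0+1)+1) * (s') * ((a₀:ℤ))^2) := by
    rw [show 2*(0+1) = 2 from rfl, hC2, ha2]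
    have : ((s0+1 : ℕ) : ℤ) = 2^σ * s' := by exact_mod_cast congrArg (Nat.cast : ℕ → ℤ) hsfact
    push_cast
    push_cast at this
    rw [show ((s0:ℤ)+1) = 2^σ * s' from this]
    ring
  rw [hfirst, pow_succ] at hdvd0
  have h2W : (2:ℤ) ∣ ((2*((s0:ℤ)+1)+1) * (s') * ((a₀:ℤ))^2) := by
    have := (mul_dvd_mul_iff_left (show (2:ℤ)^(σ+2*e) ≠ 0 by positivity)).mp hdvd0
    convert this using 2 <;> push_cast <;> ring
  have hodd : Odd ((2*((s0:ℤ)+1)+1) * (s') * ((a₀:ℤ))^2) := by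
    refine Odd.mul (Odd.mul ?_ ?_) ?_
    · exact ⟨(s0:ℤ)+1, by ring⟩
    · exact hs'odd.natCast
    · exact ha₀odd.natCast.pow
  rw [← Int.not_even_iff_odd] at hodd
  exact hodd (even_iff_two_dvd.mpr h2W)

end Crux




namespace LebAux4

open LebAux2

lemma intCast_mk (n : ℤ) : ((n : ℤi)) = ⟨n, 0⟩ := by
  rw [Zsqrtd.ext_iff]
  exact ⟨Zsqrtd.re_intCast _, Zsqrtd.im_intCast _⟩

lemma unit_pow_four (v : ℤi) (hv : IsUnit v) : v ^ 4 = 1 := by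
  have hn : v.norm = 1 := (Zsqrtd.norm_eq_one_iff' (by norm_num) v).mpr hv
  rw [Zsqrtd.norm_def] at hn
  have h1 : v.re * v.re + v.im * v.im = 1 := by linarith
  have him0 : v.re * v.im = 0 := by
    have hre2 : v.re * v.re ≤ 1 := by nlinarith [mul_self_nonneg v.im]
    have him2 : v.im * v.im ≤ 1 := by nlinarith [mul_self_nonneg v.re]
    have hre : -1 ≤ v.re ∧ v.re ≤ 1 := by constructor <;> nlinarith
    have him : -1 ≤ v.im ∧ v.im ≤ 1 := by constructor <;> nlinarith
    obtain ⟨h2, h3⟩ := hre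
    obtain ⟨h4, h5⟩ := him
    interval_cases v.re <;> interval_cases v.im <;> omega
  have hvv : v * v = ((v.re * v.re - v.im * v.im : ℤ) : ℤi) := by
    rw [Zsqrtd.ext_iff]
    constructor
    · simp [Zsqrtd.re_mul, Zsqrtd.re_intCast]
      ring
    · simp [Zsqrtd.im_mul, Zsqrtd.im_intCast]
      linarith [him0]
  have hcc : v.re * v.re - v.im * v.im = 1 ∨ v.re * v.re - v.im * v.im = -1 := by
    rcases mul_eq_zero.mp him0 with h | h
    · right
      rw [h] at h1 ⊢
      linarith
    · left
      rw [h] at h1 ⊢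
      linarith
  have h4 : v ^ 4 = (v*v) * (v*v) := by ring
  rw [h4, hvv]
  rcases hcc with h | h <;> rw [h] <;> push_cast <;> ring

lemma lebesgue_odd (s : ℕ) (hs : 1 ≤ s) (x y : ℤ) (h : y ^ (2*s+1) = x ^ 2 + 1) :
    x = 0 := by
  set m := 2*s+1 with hm
  have hmodd : Odd m := ⟨s, by omega⟩
  -- y is odd
  have hyodd : Odd y := by
    rw [← Int.not_even_iff_odd]
    intro ⟨k, hk⟩
    have h4 : (4:ℤ) ∣ y ^ m := by
      have : y ^ m = y^2 * y^(m-2) := by rw [← pow_add]; congr 1; omega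
      rw [this, hk]
      exact Dvd.dvd.mul_right ⟨k*k, by ring⟩ _
    rw [h] at h4
    obtain ⟨c, hc⟩ := h4
    rcases Int.even_or_odd x with ⟨j, hj⟩ | ⟨j, hj⟩
    · have : (j*j)*4 + 1 = 4*c := by rw [← hc, hj]; ring
      omega
    · have : (j*j+j)*4 + 2 = 4*c := by rw [← hc, hj]; ring
      omega
  -- x is even
  have hxeven : Even x := by
    rcases Int.even_or_odd x with he | ⟨j, hj⟩
    · exact he
    · exfalso
      obtain ⟨d, hd⟩ := hyodd.pow (n := m)
      rw [h, hj] at hd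
      have : (j*j+j)*4 + 2 = 2*d+1 := by rw [← hd]; ring
      omega
  obtain ⟨k, hk⟩ := hxeven
  have hx2k : x = 2*k := by omega
  -- Gaussian integers
  set p : ℤi := ⟨x, 1⟩ with hpdef
  set q : ℤi := ⟨x, -1⟩ with hqdef
  have hpq : p * q = ((x^2+1 : ℤ) : ℤi) := by
    rw [intCast_mk, hpdef, hqdef, Zsqrtd.ext_iff]
    constructor
    · simp [Zsqrtd.re_mul]
      ring
    · simp [Zsqrtd.im_mul]
  have hpmq : p - q = (⟨0, 2⟩ : ℤi) := by
    rw [hpdef, hqdef, Zsqrtd.ext_iff]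
    constructor <;> simp [Zsqrtd.re_sub, Zsqrtd.im_sub]
  have hsq : (p - q)^2 = ((-4 : ℤ) : ℤi) := by
    rw [hpmq, intCast_mk, pow_two, Zsqrtd.ext_iff]
    constructor
    · rw [Zsqrtd.re_mul]
      norm_num
    · rw [Zsqrtd.im_mul]
      norm_num
  have key : p * q + ((k^2 : ℤ) : ℤi) * (p - q)^2 = 1 := by
    rw [hpq, hsq, ← Int.cast_mul, ← Int.cast_add,
      show (x^2+1) + k^2*(-4) = 1 from by rw [hx2k]; ring, Int.cast_one]
  have hcop : IsCoprime p q :=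
    ⟨q + ((k^2 : ℤ) : ℤi) * p - 2 * ((k^2 : ℤ) : ℤi) * q, ((k^2 : ℤ) : ℤi) * q,
      by linear_combination key⟩
  have hprod : p * q = ((y : ℤi)) ^ m := by
    rw [hpq, ← h]
    push_cast
    ring
  obtain ⟨α, u, hu⟩ := exists_associated_pow_of_mul_eq_pow' hcop hprod
  have hu4 : (u : ℤi) ^ 4 = 1 := unit_pow_four _ u.isUnit
  set γ : ℤi := α * (u : ℤi) ^ m with hγdef
  have hγ : γ ^ m = p := by
    have humm : ((u : ℤi) ^ m) ^ m = (u : ℤi) := by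
      rw [← pow_mul, show m*m = 4*(s*s+s)+1 from by rw [hm]; ring, pow_succ, pow_mul, hu4,
        one_pow, one_mul]
    rw [hγdef, mul_pow, humm, hu]
  -- notation: a, b the parts of γ
  set a := γ.re with hadef
  set b := γ.im with hbdef
  have hγmk : γ = (⟨a, b⟩ : ℤi) := rfl
  -- conjugation
  have hstarp : star p = q := by rw [hpdef, hqdef, Zsqrtd.star_mk]
  have hqγ : (star γ) ^ m = q := by rw [← star_pow, hγ, hstarp]
  -- b = ±1
  have hdvd : (γ - star γ) ∣ (p - q) := by
    rw [← hγ, ← hqγ]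
    exact sub_dvd_pow_sub_pow _ _ m
  have hgsub : γ - star γ = (⟨0, 2*b⟩ : ℤi) := by
    rw [Zsqrtd.ext_iff]
    constructor <;>
      simp [Zsqrtd.re_sub, Zsqrtd.im_sub, Zsqrtd.re_star, Zsqrtd.im_star, ← hadef, ← hbdef] <;>
      ring
  obtain ⟨w, hw⟩ := hdvd
  have hnormw := congrArg Zsqrtd.norm hw
  rw [Zsqrtd.norm_mul, hgsub, hpmq] at hnormw
  have hn1 : (⟨0,2⟩ : ℤi).norm = 4 := by
    rw [Zsqrtd.norm_def]
    norm_num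
  have hn2 : (⟨0,2*b⟩ : ℤi).norm = 4*(b*b) := by
    rw [Zsqrtd.norm_def]
    show (0 : ℤ)*0 - (-1)*(2*b)*(2*b) = 4*(b*b)
    ring
  rw [hn1, hn2] at hnormw
  have h41 : (4:ℤ)*(b*b*w.norm) = 4*1 := by linear_combination -hnormw
  have hbbw : b*b*w.norm = 1 := mul_left_cancel₀ (by norm_num) h41
  have hb2 : b * b = 1 := by
    rcases Int.eq_one_or_neg_one_of_mul_eq_one' hbbw with ⟨h1, _⟩ | ⟨h1, _⟩
    · exact h1
    · nlinarith [mul_self_nonneg b]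
  have hb2sq : b^2 = 1 := by rw [pow_two]; exact hb2
  -- the norm of γ is y
  have hnγm : γ.norm ^ m = y ^ m := by
    have h1 : (γ^m).norm = γ.norm ^ m := map_pow (Zsqrtd.normMonoidHom) γ m
    rw [hγ, hpdef] at h1
    rw [← h1, Zsqrtd.norm_def, h]
    ring
  have hnγy : γ.norm = y := hmodd.strictMono_pow.injective hnγm
  have hyab : a*a + b*b = y := by
    rw [← hnγy, Zsqrtd.norm_def, ← hadef, ← hbdef]
    ring
  have hya : y = a*a + 1 := by rw [← hyab, hb2]
  have haeven : Even a := by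
    rcases Int.even_or_odd a with he | ⟨j, hj⟩
    · exact he
    · exfalso
      obtain ⟨d, hd⟩ := hyodd
      have : 2*(j*j+j)*2 + 2 = 2*d + 1 := by
        rw [← hd, hya, hj]; ring
      omega
  -- the imaginary part of γ^m is 1
  have him1 : ((⟨a, b⟩ : ℤi) ^ m).im = 1 := by
    rw [← hγmk, hγ, hpdef]
  rw [hm, LebAux2.im_pow_formula a b s] at him1
  -- extract b from the sum
  have hbpow : ∀ j : ℕ, b^(2*j+1) = b := by
    intro j
    rw [pow_succ, pow_mul, hb2sq, one_pow, one_mul]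
  have hbT : b * (∑ j ∈ range (s+1), a^(2*(s-j)) * (((2*s+1).choose (2*j+1)):ℤ) * (-1)^j)
      = 1 := by
    have hsum_eq : b * (∑ j ∈ range (s+1), a^(2*(s-j)) * (((2*s+1).choose (2*j+1)):ℤ) * (-1)^j)
        = ∑ j ∈ range (s+1), b^(2*j+1) * a^(2*(s-j)) * (((2*s+1).choose (2*j+1)):ℤ) * (-1)^j := by
      rw [Finset.mul_sum]
      refine Finset.sum_congr rfl fun j hj => ?_
      rw [hbpow j]
      ring
    rw [hsum_eq]
    exact him1
  set T := ∑ j ∈ range (s+1), a^(2*(s-j)) * (((2*s+1).choose (2*j+1)):ℤ) * (-1)^j with hTdef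
  have hTpm : T = 1 ∨ T = -1 := by
    rcases Int.eq_one_or_neg_one_of_mul_eq_one' hbT with ⟨_, h1⟩ | ⟨_, h1⟩
    · exact Or.inl h1
    · exact Or.inr h1
  by_cases ha0 : a = 0
  · -- then x = 0
    have hγ0 : γ = ((b : ℤ) : ℤi) * Ii := by
      rw [hγmk, ha0, Zsqrtd.ext_iff]
      constructor <;>
        simp [Ii, Zsqrtd.re_mul, Zsqrtd.im_mul, Zsqrtd.re_intCast, Zsqrtd.im_intCast]
    have hpre : p.re = 0 := by
      rw [← hγ, hγ0, mul_pow, hm, LebAux2.Ipow_odd s]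
      have hcomb : ((b:ℤ) : ℤi)^(2*s+1) * ((((-1:ℤ)^s : ℤ)) : ℤi) * Ii
          = ((b^(2*s+1) * (-1)^s : ℤ) : ℤi) * Ii := by
        push_cast
        ring
      rw [← mul_assoc, hcomb, Zsqrtd.re_smul]
      simp [Ii]
    rw [hpdef] at hpre
    exact hpre
  · exfalso
    have hlast : a^(2*(s-s)) * (((2*s+1).choose (2*s+1)):ℤ) * (-1)^s = (-1)^s := by
      simp [Nat.choose_self]
    have hTR : T = (∑ j ∈ range s, a^(2*(s-j)) * (((2*s+1).choose (2*j+1)):ℤ) * (-1)^j)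
        + (-1)^s := by
      rw [hTdef, Finset.sum_range_succ, hlast]
    set R := ∑ j ∈ range s, a^(2*(s-j)) * (((2*s+1).choose (2*j+1)):ℤ) * (-1)^j with hRdef
    have hdvdR : (a*a) ∣ R := by
      refine Finset.dvd_sum fun j hj => ?_
      have hjs : j < s := Finset.mem_range.mp hj
      have h1 : (a*a) ∣ a^(2*(s-j)) := by
        rw [← pow_two]
        exact pow_dvd_pow a (by omega)
      exact (h1.mul_right _).mul_right _
    have hR0 : R = 0 := by
      have hRval : R = T - (-1)^s := by rw [hTR]; ring
      have habs2 : 2 ≤ a.natAbs := by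
        obtain ⟨c, hc⟩ := haeven
        omega
      have h4 : 4 ≤ (a*a).natAbs := by
        rw [Int.natAbs_mul]
        nlinarith
      have hRsmall : R.natAbs < (a*a).natAbs := by
        rcases hTpm with h1 | h1 <;> rcases neg_one_pow_eq_or ℤ s with h2 | h2 <;>
          rw [hRval, h1, h2] <;> omega
      exact Int.eq_zero_of_dvd_of_natAbs_lt_natAbs hdvdR hRsmall
    exact Crux.crux s hs a ha0 haeven (hRdef ▸ hR0)

end LebAux4

/-- Lebesgue's theorem: for `m ≥ 3`, if `y^m = x^2 + 1` in the integers,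
then `x = 0` and `y^m = 1`. -/
theorem stmt_11 (m : ℕ) (hm : 3 ≤ m) (x y : ℤ) (h : y ^ m = x ^ 2 + 1) :
    x = 0 ∧ y ^ m = 1 := by
  have hx : x = 0 := by
    rcases Nat.even_or_odd m with ⟨n, hn⟩ | ⟨s, hs⟩
    · refine LebesgueAux.sq_eq_sq_add_one x (y^n) ?_
      rw [← pow_mul, show n*2 = m from by omega, h]
    · exact LebAux4.lebesgue_odd s (by omega) x y (by rw [show 2*s+1 = m from by omega, h])
  refine ⟨hx, ?_⟩
  rw [h, hx]
  ring
end
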